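/- Through every point of PHG(2, ℤ/4ℤ) there pass exactly 6 lines (in general, through any point of PHG(2,R) over a chain ring R with parameters (q,m) there are q^m + q^{m-1} lines; here q = 2, m = 2). -/

import Mathlib

/-- A point of a projective Hjelmslev geometry PHG(n-1, R): a free rank-1 submodule
of Rⁿ, i.e. the R-span of a vector having at least one unit coordinate. -/
def IsPoint {R : Type} [CommRing R] {n : ℕ} (P : Submodule R (Fin n → R)) : Prop :=
  ∃ v : Fin n → R, (∃ i, IsUnit (v i)) ∧ P = Submodule.span R {v}

/-- A free rank-k submodule of Rⁿ: a submodule linearly isomorphic to Rᵏ. -/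
def IsFreeRank {R : Type} [CommRing R] {n : ℕ} (k : ℕ) (L : Submodule R (Fin n → R)) : Prop :=
  Nonempty ((Fin k → R) ≃ₗ[R] L)

/-- A line of PHG(2, R): a free rank-2 submodule of R³. -/
abbrev IsLine {R : Type} [CommRing R] (L : Submodule R (Fin 3 → R)) : Prop := IsFreeRank 2 L

abbrev R4 := ZMod 4

/-! A coordinate swap followed by a transvection is a linear automorphism of R³ carrying any
point to ⟨e₀⟩, so it suffices to count the lines through e₀. A free rank-2 submodule is the span
of a linearly independent pair, because a surjective endomorphism of Rᵏ is injective. If such a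
span contains e₀ = α a + β b, then α or β is a unit (otherwise e₀ ∈ 2R³), so one generator can
be exchanged for e₀ and the line is span {e₀, (0, b, c)}; it is free exactly when (b, c) is
unimodular. Rescaling (b, c) by a unit does not change the line, so the lines through e₀ are
indexed by the 6 points of the projective line over ℤ/4ℤ: 12 unimodular pairs modulo the
2 units. -/

open Submodule

theorem span_pair_smul_add_eq {R M : Type*} [Ring R] [AddCommGroup M] [Module R M] {α : R}
    (hα : IsUnit α) (β : R) (x y : M) : span R {α • x + β • y, y} = span R {x, y} := by
  refine le_antisymm (span_le.2 (Set.pair_subset_iff.2 ⟨?_, subset_span (by simp)⟩))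
    (span_le.2 (Set.pair_subset_iff.2 ⟨?_, subset_span (by simp)⟩))
  · exact mem_span_pair.2 ⟨α, β, rfl⟩
  · obtain ⟨u, rfl⟩ := hα
    refine mem_span_pair.2 ⟨↑u⁻¹, -(↑u⁻¹ * β), ?_⟩
    rw [smul_add, smul_smul, Units.inv_mul, one_smul, smul_smul, add_assoc, ← add_smul]
    simp

section FreeRank

variable {R : Type} [CommRing R] {n m k : ℕ}

theorem IsFreeRank.map_equiv {L : Submodule R (Fin n → R)} (hL : IsFreeRank k L)
    (e : (Fin n → R) ≃ₗ[R] (Fin m → R)) : IsFreeRank k (L.map e.toLinearMap) :=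
  hL.elim fun f => ⟨f.trans (e.submoduleMap L)⟩

theorem ncard_setOf_isFreeRank_map_le (e : (Fin n → R) ≃ₗ[R] (Fin m → R))
    (P : Submodule R (Fin n → R)) :
    {L | IsFreeRank k L ∧ P.map e.toLinearMap ≤ L}.ncard
      = {L | IsFreeRank k L ∧ P ≤ L}.ncard := by
  have himage : {L | IsFreeRank k L ∧ P.map e.toLinearMap ≤ L}
      = map e.toLinearMap '' {L | IsFreeRank k L ∧ P ≤ L} := by
    ext L
    refine ⟨fun ⟨hL, hPL⟩ => ⟨L.map e.symm.toLinearMap, ⟨hL.map_equiv e.symm, ?_⟩, ?_⟩,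
      fun ⟨L', ⟨hL', hPL'⟩, hL⟩ => hL ▸ ⟨hL'.map_equiv e, map_mono hPL'⟩⟩
    · rwa [← comap_equiv_eq_map_symm, ← map_le_iff_le_comap]
    · rw [← comap_equiv_eq_map_symm, map_comap_eq_of_surjective e.surjective]
  rw [himage, Set.ncard_image_of_injective _ (map_injective_of_injective e.injective)]

theorem IsPoint.exists_map_span_single_eq {P : Submodule R (Fin n → R)} (hP : IsPoint P)
    (j : Fin n) : ∃ e : (Fin n → R) ≃ₗ[R] (Fin n → R),
      (span R {Pi.single j 1}).map e.toLinearMap = P := by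
  obtain ⟨v, ⟨i, hvi⟩, rfl⟩ := hP
  set w := (hvi.unit⁻¹ : Rˣ) • v
  have hwi : w i = 1 := by simp [w, Units.smul_def]
  let τ := LinearEquiv.transvection (f := LinearMap.proj i) (v := w - Pi.single i 1)
    (by simp [hwi])
  have hτ : τ (Pi.single i 1) = w := by
    simp [τ, LinearMap.transvection.apply]
  have hswap : LinearEquiv.funCongrLeft R R (Equiv.swap i j) (Pi.single j 1) = Pi.single i 1 := by
    ext k
    simp [Pi.single_apply, Equiv.swap_apply_eq_iff]
  refine ⟨(LinearEquiv.funCongrLeft R R (Equiv.swap i j)).trans τ, ?_⟩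
  rw [map_span, Set.image_singleton, LinearEquiv.coe_toLinearMap, LinearEquiv.trans_apply, hswap,
    hτ, span_singleton_group_smul_eq]

theorem isFreeRank_span_range_iff {v : Fin k → Fin n → R} :
    IsFreeRank k (span R (Set.range v)) ↔ LinearIndependent R v := by
  refine ⟨fun ⟨f⟩ => ?_, fun hv => ⟨(Module.Basis.span hv).equivFun.symm⟩⟩
  let g := (Fintype.linearCombination R v).codRestrict (span R (Set.range v))
    (fun c => Fintype.range_linearCombination R v ▸ LinearMap.mem_range_self _ c)
  have hg : Function.Surjective g := by
    rintro ⟨x, hx⟩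
    rw [← Fintype.range_linearCombination] at hx
    obtain ⟨c, rfl⟩ := hx
    exact ⟨c, rfl⟩
  have hinj := OrzechProperty.injective_of_surjective_endomorphism (f.symm.toLinearMap ∘ₗ g)
    (f.symm.surjective.comp hg)
  rw [linearIndependent_iff_injective_fintypeLinearCombination]
  exact fun a b hab => hinj (by simp [g, Subtype.ext_iff, hab])

theorem IsFreeRank.exists_eq_span_range {L : Submodule R (Fin n → R)} (hL : IsFreeRank k L) :
    ∃ v : Fin k → Fin n → R, L = span R (Set.range v) := by
  obtain ⟨f⟩ := hL
  let b := (Pi.basisFun R (Fin k)).map f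
  refine ⟨fun i => b i, ?_⟩
  rw [Set.range_comp', show (Subtype.val : L → _) = L.subtype from rfl, ← map_span, b.span_eq,
    Submodule.map_top, range_subtype]

end FreeRank

namespace HjelmslevPlaneZMod4

theorem isUnit_or_two_mul_eq_zero (x : R4) : IsUnit x ∨ 2 * x = 0 := by
  revert x
  decide

def lineThroughE₀ (b c : R4) : Submodule R4 (Fin 3 → R4) :=
  span R4 {Pi.single 0 1, ![0, b, c]}

theorem isLine_lineThroughE₀_iff {b c : R4} :
    IsLine (lineThroughE₀ b c) ↔ IsUnit b ∨ IsUnit c := by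
  rw [lineThroughE₀, ← Matrix.range_cons_cons_empty _ _ ![]]
  refine isFreeRank_span_range_iff.trans ?_
  rw [LinearIndependent.pair_iff]
  revert b c
  decide

theorem lineThroughE₀_mul {u : R4} (hu : IsUnit u) (b c : R4) :
    lineThroughE₀ (u * b) (u * c) = lineThroughE₀ b c := by
  have hsmul :
      (![0, u * b, u * c] : Fin 3 → R4) = u • ![0, b, c] + (0 : R4) • Pi.single 0 1 := by
    ext i; fin_cases i <;> simp
  rw [lineThroughE₀, lineThroughE₀, Set.pair_comm, hsmul, span_pair_smul_add_eq hu,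
    Set.pair_comm]

theorem exists_lineThroughE₀_eq {L : Submodule R4 (Fin 3 → R4)} (hL : IsLine L)
    (h₀ : Pi.single 0 1 ∈ L) : ∃ b c, L = lineThroughE₀ b c := by
  obtain ⟨v, rfl⟩ := hL.exists_eq_span_range
  have hv : Set.range v = {v 0, v 1} := by
    ext
    simp [Fin.exists_fin_two, eq_comm]
  rw [hv] at h₀ ⊢
  obtain ⟨α, β, hαβ⟩ := mem_span_pair.1 h₀
  obtain ⟨d, hd⟩ : ∃ d, span R4 {v 0, v 1} = span R4 {Pi.single 0 1, d} := by
    rcases isUnit_or_two_mul_eq_zero α with hα | hα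
    · exact ⟨v 1, by rw [← hαβ, span_pair_smul_add_eq hα]⟩
    rcases isUnit_or_two_mul_eq_zero β with hβ | hβ
    · exact ⟨v 0, by rw [← hαβ, add_comm, Set.pair_comm, span_pair_smul_add_eq hβ]⟩
    have h2 : (2 : R4) • (Pi.single 0 1 : Fin 3 → R4) = 0 := by
      rw [← hαβ, smul_add, smul_smul, smul_smul, hα, hβ, zero_smul, zero_smul, add_zero]
    exact absurd (congrFun h2 0) (by decide)
  have hd' : d = (1 : R4) • ![0, d 1, d 2] + d 0 • Pi.single 0 1 := by
    ext i; fin_cases i <;> simp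
  refine ⟨d 1, d 2, ?_⟩
  rw [hd, lineThroughE₀, Set.pair_comm, Set.pair_comm _ ![0, d 1, d 2],
    ← span_pair_smul_add_eq isUnit_one (d 0) ![0, d 1, d 2], ← hd']

def projectiveLineReps : Finset (R4 × R4) :=
  {(1, 0), (1, 1), (1, 2), (1, 3), (0, 1), (2, 1)}

theorem exists_mul_mem_projectiveLineReps {b c : R4} (hbc : IsUnit b ∨ IsUnit c) :
    ∃ u : R4, IsUnit u ∧ (u * b, u * c) ∈ projectiveLineReps := by
  revert b c
  decide

theorem injOn_lineThroughE₀ :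
    Set.InjOn (fun p : R4 × R4 => lineThroughE₀ p.1 p.2) projectiveLineReps := by
  have key : ∀ p ∈ projectiveLineReps, ∀ q ∈ projectiveLineReps,
      (∃ m n : R4, m • Pi.single 0 1 + n • ![0, q.1, q.2] = ![0, p.1, p.2]) → p = q := by
    decide
  intro p hp q hq hpq
  have hmem : ![0, p.1, p.2] ∈ lineThroughE₀ q.1 q.2 := by
    rw [← show lineThroughE₀ p.1 p.2 = lineThroughE₀ q.1 q.2 from hpq]
    exact subset_span (by simp)
  exact key p hp q hq (mem_span_pair.1 hmem)

theorem setOf_isLine_span_single_le_eq_image :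
    {L : Submodule R4 (Fin 3 → R4) | IsLine L ∧ span R4 {Pi.single 0 1} ≤ L}
      = (fun p : R4 × R4 => lineThroughE₀ p.1 p.2) '' projectiveLineReps := by
  ext L
  constructor
  · rintro ⟨hL, h₀⟩
    obtain ⟨b, c, rfl⟩ := exists_lineThroughE₀_eq hL (span_singleton_le_iff_mem _ _ |>.1 h₀)
    obtain ⟨u, hu, hmem⟩ := exists_mul_mem_projectiveLineReps (isLine_lineThroughE₀_iff.1 hL)
    exact ⟨_, hmem, lineThroughE₀_mul hu b c⟩
  · rintro ⟨p, hp, rfl⟩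
    have hunimod : ∀ p ∈ projectiveLineReps, IsUnit p.1 ∨ IsUnit p.2 := by decide
    exact ⟨isLine_lineThroughE₀_iff.2 (hunimod p hp),
      (span_singleton_le_iff_mem _ _).2 (subset_span (by simp))⟩

end HjelmslevPlaneZMod4

/-- Through every point of PHG(2, ℤ/4ℤ) there pass exactly 6 = 2² + 2 lines. -/
theorem lines_through_point :
    ∀ P : Submodule R4 (Fin 3 → R4), IsPoint P →
      {L : Submodule R4 (Fin 3 → R4) | IsLine L ∧ P ≤ L}.ncard = 6 := by
  intro P hP
  obtain ⟨e, rfl⟩ := hP.exists_map_span_single_eq 0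
  rw [ncard_setOf_isFreeRank_map_le, HjelmslevPlaneZMod4.setOf_isLine_span_single_le_eq_image,
    HjelmslevPlaneZMod4.injOn_lineThroughE₀.ncard_image, Set.ncard_coe_finset]
  rfl
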